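/- Let α, β ∈ L' and let ℓ, m, n be integers such that m̃ := m/(2Δ) − q(α), ℓ̃ := ℓ/Δ − ⟨α,β⟩, and ñ := n/(2Δ) − q(β) are all integers. Then for every integer u ≥ 1: Σ_{d mod u, gcd(d,u)=1} e_u(ñ·d)·𝒮(d,u) = u^(g+1) · Σ_{t | u} μ(u/t)·t^(−g)·N(t), where 𝒮(d,u) = Σ_{v mod u} Σ_{r ∈ (ℤ/uℤ)^g} e_u(d·f(v,r)) and μ is the Möbius function. -/

import Mathlib

open scoped BigOperators Classical

noncomputable section

/-- The bilinear form `⟨x,y⟩ = xᵀ M y` on `ℚ^g`. -/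
def bform {g : ℕ} (M : Matrix (Fin g) (Fin g) ℤ) (x y : Fin g → ℚ) : ℚ :=
  dotProduct x (Matrix.mulVec (M.map (Int.cast : ℤ → ℚ)) y)

/-- The quadratic form `q(x) = ⟨x,x⟩/2`. -/
def qf {g : ℕ} (M : Matrix (Fin g) (Fin g) ℤ) (x : Fin g → ℚ) : ℚ :=
  bform M x x / 2

/-- Membership in the dual lattice `L' = {x : ⟨x,y⟩ ∈ ℤ for all y ∈ ℤ^g}`. -/
def IsDual {g : ℕ} (M : Matrix (Fin g) (Fin g) ℤ) (x : Fin g → ℚ) : Prop :=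
  ∀ y : Fin g → ℤ, ∃ z : ℤ, bform M x (fun i => (y i : ℚ)) = (z : ℚ)

/-- `e_c(x) = exp(2πix/c)`. -/
def ec (c : ℤ) (x : ℚ) : ℂ :=
  Complex.exp (2 * Real.pi * Complex.I * (x : ℂ) / (c : ℂ))

/-- Fundamental discriminant. -/
def IsFundDisc (D : ℤ) : Prop :=
  D ≠ 0 ∧ ((D % 4 = 1 ∧ Squarefree D) ∨
    ∃ D₀ : ℤ, D = 4 * D₀ ∧ Squarefree D₀ ∧ (D₀ % 4 = 2 ∨ D₀ % 4 = 3))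

/-- The Kronecker symbol at 2. -/
def kron2 (a : ℤ) : ℤ :=
  if a % 2 = 0 then 0 else if a % 8 = 1 ∨ a % 8 = 7 then 1 else -1

/-- The Kronecker symbol `(a|b)`. -/
def kron (a b : ℤ) : ℤ :=
  if b = 0 then (if a = 1 ∨ a = -1 then 1 else 0)
  else (if b < 0 ∧ a < 0 then -1 else 1) *
    kron2 a ^ (b.natAbs.factorization 2) *
    jacobiSym a (b.natAbs / 2 ^ (b.natAbs.factorization 2))

/-- The generalized Kloosterman sum `S_{α,β}(m,n,c)` (normalized by `i^σ`). -/
def Kloos {g : ℕ} (M : Matrix (Fin g) (Fin g) ℤ) (α β : Fin g → ℚ)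
    (m n : ℤ) (c : ℕ) : ℂ :=
  ((((Real.sqrt c) ^ g)⁻¹ * (Real.sqrt (M.det.natAbs))⁻¹ : ℝ) : ℂ) *
    ∑ d ∈ Finset.range c,
      if Nat.gcd d c = 1 then
        ∑ r : Fin g → Fin c,
          ec c (-((((d : ZMod c)⁻¹).val : ℚ) * qf M (fun i => α i + ((r i : ℕ) : ℚ)))
              + bform M β (fun i => α i + ((r i : ℕ) : ℚ))
              - (d : ℚ) * qf M β) *
          ec (2 * M.det * c) ((m : ℚ) * (((d : ZMod c)⁻¹).val : ℚ) + (n : ℚ) * (d : ℚ))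
      else 0

/-- `p*` as in Gross–Kohnen–Zagier. -/
def pstar (p : ℕ) (m : ℤ) : ℤ :=
  if p = 2 then
    (if (m / 2 ^ (m.natAbs.factorization 2)) % 4 = 1 then 1 else -1)
      * 2 ^ (m.natAbs.factorization 2)
  else if (p : ℤ) % 4 = 1 then (p : ℤ) else -(p : ℤ)

/-- The genus character `χ_m(Nc, ℓ, (ℓ²−mn)/(4Nc))`, via the GKZ product formula. -/
def chiGKZ (Δ m ℓ n : ℤ) (c : ℕ) : ℤ :=
  ∏ p ∈ c.primeFactors,
    if (p : ℤ) ∣ m then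
      kron (m / pstar p m) ((p : ℤ) ^ (c.factorization p + (2 * Δ).natAbs.factorization p)) *
        kron (pstar p m)
          ((ℓ ^ 2 - m * n) / (p : ℤ) ^ (c.factorization p + (2 * Δ).natAbs.factorization p))
    else kron m ((p : ℤ) ^ (c.factorization p))

/-- `f(v,r) = m̃v² − ⟨α,r⟩v − q(r) + ⟨β,r⟩ − ℓ̃v`. -/
def fval {g : ℕ} (M : Matrix (Fin g) (Fin g) ℤ) (α β : Fin g → ℚ)
    (ℓ m : ℤ) (v : ℤ) (r : Fin g → ℤ) : ℚ :=
  ((m : ℚ) / (2 * M.det) - qf M α) * (v : ℚ) ^ 2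
    - bform M α (fun i => (r i : ℚ)) * (v : ℚ)
    - qf M (fun i => (r i : ℚ))
    + bform M β (fun i => (r i : ℚ))
    - ((ℓ : ℚ) / (M.det : ℚ) - bform M α β) * (v : ℚ)

/-- `N(t)`: the number of solutions of `f(v,r) + ñ ≡ 0 (mod t)`. -/
def Ncount {g : ℕ} (M : Matrix (Fin g) (Fin g) ℤ) (α β : Fin g → ℚ)
    (ℓ m n : ℤ) (t : ℕ) : ℕ :=
  Nat.card {vr : Fin t × (Fin g → Fin t) //
    ∃ z : ℤ, fval M α β ℓ m ((vr.1 : ℕ) : ℤ) (fun i => ((vr.2 i : ℕ) : ℤ))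
        + ((n : ℚ) / (2 * M.det) - qf M β) = (z : ℚ) * (t : ℚ)}

/-- `M_j(p^k)` (with ambient modulus `p^λ`). -/
def Mcount {g : ℕ} (M : Matrix (Fin g) (Fin g) ℤ) (α β : Fin g → ℚ)
    (ℓ m n : ℤ) (p lam j k : ℕ) : ℕ :=
  Nat.card {vr : Fin (p ^ lam) × (Fin g → Fin (p ^ lam)) //
    (∃ z : ℤ, fval M α β ℓ m ((vr.1 : ℕ) : ℤ) (fun i => ((vr.2 i : ℕ) : ℤ))
        + ((n : ℚ) / (2 * M.det) - qf M β) = (z : ℚ) * (p : ℚ) ^ k) ∧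
    (∃ z : ℤ, 2 * ((m : ℚ) / (2 * M.det) - qf M α) * ((vr.1 : ℕ) : ℚ)
        - bform M α (fun i => ((vr.2 i : ℕ) : ℚ))
        - ((ℓ : ℚ) / (M.det : ℚ) - bform M α β) = (z : ℚ) * (p : ℚ) ^ j) ∧
    (∀ y : Fin g → ℤ, ∃ z : ℤ,
        bform M (fun i => α i * ((vr.1 : ℕ) : ℚ) + ((vr.2 i : ℕ) : ℚ) - β i)
          (fun i => (y i : ℚ)) = (z : ℚ) * (p : ℚ) ^ j)}

/-- The exponential sum `𝒮(d,u)`. -/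
def Ssum {g : ℕ} (M : Matrix (Fin g) (Fin g) ℤ) (α β : Fin g → ℚ)
    (ℓ m : ℤ) (d : ℤ) (u : ℕ) : ℂ :=
  ∑ v : Fin u, ∑ r : Fin g → Fin u,
    ec u ((d : ℚ) * fval M α β ℓ m ((v : ℕ) : ℤ) (fun i => ((r i : ℕ) : ℤ)))

/-- `ξ_{α,β}(ℓ,m,n,·)` at a prime power `p^λ`. -/
def xiP {g : ℕ} (M : Matrix (Fin g) (Fin g) ℤ) (α β : Fin g → ℚ)
    (ℓ m n : ℤ) (p lam : ℕ) : ℚ :=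
  if p = 2 ∨ ((p : ℤ) ∣ m ∧ (p : ℤ) ∣ M.det) then
    (if ((M.det.natAbs : ℤ) * (p : ℤ) ^ (2 * (lam / 2))) ∣ (ℓ ^ 2 - m * n) then
      ((Ncount M α β ℓ m n (p ^ lam) : ℚ)
          - (p : ℚ) ^ g * (Ncount M α β ℓ m n (p ^ (lam - 1)) : ℚ))
        / (p : ℚ) ^ (lam * ((g + 1) / 2))
    else 0)
  else if (p : ℤ) ∣ m then
    (if (p : ℤ) ^ lam ∣ (ℓ ^ 2 - m * n) then
      ((kron (((-4) ^ ((g - 1) / 2) * m) / pstar p m) ((p : ℤ) ^ lam)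
        * kron (pstar p m) ((ℓ ^ 2 - m * n) / (p : ℤ) ^ lam) : ℤ) : ℚ)
    else 0)
  else
    (if (p : ℤ) ^ (lam + (2 * M.det).natAbs.factorization p) ∣ (ℓ ^ 2 - m * n) then
      ((kron ((-4) ^ ((g - 1) / 2) * m) ((p : ℤ) ^ lam) : ℤ) : ℚ)
    else 0)

/-- The multiplicative function `ξ_{α,β}(ℓ,m,n,c)`. -/
def xi {g : ℕ} (M : Matrix (Fin g) (Fin g) ℤ) (α β : Fin g → ℚ)
    (ℓ m n : ℤ) (c : ℕ) : ℚ :=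
  ∏ p ∈ c.primeFactors, xiP M α β ℓ m n p (c.factorization p)

end

open Finset in
theorem ec_add' (c : ℤ) (x y : ℚ) : ec c (x + y) = ec c x * ec c y := by
  rw [ec, ec, ec, ← Complex.exp_add]; congr 1; push_cast; ring

theorem ec_int_one (c : ℤ) (k : ℤ) : ec c ((k * c : ℤ) : ℚ) = 1 := by
  rcases eq_or_ne c 0 with rfl | hc
  · simp [ec]
  · rw [ec]
    have hc' : (c : ℂ) ≠ 0 := by exact_mod_cast hc
    have : (2 * ↑Real.pi * Complex.I * (((k * c : ℤ) : ℚ) : ℂ) / (c : ℂ))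
        = (k : ℂ) * (2 * Real.pi * Complex.I) := by
      field_simp; push_cast; ring
    rw [this, Complex.exp_int_mul_two_pi_mul_I]

theorem ec_pow (q : ℕ) (a : ℚ) (e : ℕ) : ec q ((e : ℚ) * a) = ec q a ^ e := by
  rw [ec, ec, ← Complex.exp_nat_mul]; congr 1; push_cast; ring

theorem ec_eq_one_iff (q : ℕ) (hq : 1 ≤ q) (a : ℤ) :
    ec q (a : ℚ) = 1 ↔ (q : ℤ) ∣ a := by
  constructor
  · intro h1
    rw [ec, Complex.exp_eq_one_iff] at h1
    obtain ⟨n, hn⟩ := h1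
    have hq0 : ((q : ℤ) : ℂ) ≠ 0 := by
      exact_mod_cast (by omega : (q:ℤ) ≠ 0)
    have h3 : (2 * (Real.pi:ℂ) * Complex.I) * ((a : ℂ) / ((q:ℤ) : ℂ)) =
        (2 * (Real.pi:ℂ) * Complex.I) * (n : ℂ) := by
      push_cast at hn ⊢; linear_combination hn
    have h4 : ((a:ℤ) : ℂ) / ((q:ℤ):ℂ) = (n : ℂ) :=
      mul_left_cancel₀ Complex.two_pi_I_ne_zero h3
    have h5 : ((a : ℤ) : ℂ) = (n : ℂ) * ((q:ℤ) : ℂ) := (div_eq_iff hq0).mp h4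
    have h6 : a = n * q := by exact_mod_cast h5
    exact ⟨n, by rw [h6]; ring⟩
  · rintro ⟨k, rfl⟩
    have := ec_int_one (q : ℤ) k
    rw [show ((q:ℤ) * k) = k * (q:ℤ) by ring] at *
    exact_mod_cast this

open Finset in
theorem ec_geom (q : ℕ) (hq : 1 ≤ q) (a : ℤ) :
    ∑ e ∈ range q, ec q ((e : ℚ) * (a : ℚ)) = if (q : ℤ) ∣ a then (q : ℂ) else 0 := by
  have hw : ∀ e ∈ range q, ec q ((e:ℚ) * (a:ℚ)) = ec q (a:ℚ) ^ e := fun e _ => ec_pow q a e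
  rw [Finset.sum_congr rfl hw]
  split_ifs with h
  · rw [(ec_eq_one_iff q hq a).mpr h]
    simp
  · have hw1 : ec q (a:ℚ) ≠ 1 := fun h1 => h ((ec_eq_one_iff q hq a).mp h1)
    have hwq : ec q (a:ℚ) ^ q = 1 := by
      rw [← ec_pow]
      have : ((q:ℚ) * (a:ℚ)) = ((a * q : ℤ) : ℚ) := by push_cast; ring
      rw [this]; exact ec_int_one q a
    rw [geom_sum_eq hw1 q, hwq]
    simp

open ArithmeticFunction in
theorem moebius_indicator (k : ℕ) :
    (if k = 1 then (1:ℤ) else 0) = ∑ s ∈ k.divisors, moebius s := by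
  have h := congrArg (fun f : ArithmeticFunction ℤ => f k) moebius_mul_coe_zeta
  simp only [coe_mul_zeta_apply, one_apply] at h
  rw [← h]

theorem gcd_divisors_eq (d u : ℕ) (hu : u ≠ 0) :
    (Nat.gcd d u).divisors = u.divisors.filter (· ∣ d) := by
  ext s
  simp only [Nat.mem_divisors, Finset.mem_filter]
  constructor
  · rintro ⟨hs, -⟩
    exact ⟨⟨(Nat.dvd_gcd_iff.mp hs).2, hu⟩, (Nat.dvd_gcd_iff.mp hs).1⟩
  · rintro ⟨⟨hsu, -⟩, hsd⟩
    refine ⟨Nat.dvd_gcd hsd hsu, fun h => hu (Nat.eq_zero_of_gcd_eq_zero_right h)⟩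

open Finset in
theorem sum_range_dvd (u s : ℕ) (hs : s ∣ u) (hs0 : 0 < s) (G : ℕ → ℂ) :
    ∑ d ∈ range u, (if s ∣ d then G d else 0) = ∑ e ∈ range (u / s), G (s * e) := by
  rw [← Finset.sum_filter]
  refine Finset.sum_nbij' (fun d => d / s) (fun e => s * e) ?_ ?_ ?_ ?_ ?_
  · intro d hd
    simp only [Finset.mem_filter, Finset.mem_range] at hd ⊢
    obtain ⟨hdu, e, rfl⟩ := hd
    rw [Nat.mul_div_cancel_left _ hs0]
    exact Nat.lt_div_iff_mul_lt' hs e |>.mpr hdu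
  · intro e he
    simp only [Finset.mem_range, Finset.mem_filter] at he ⊢
    constructor
    · calc s * e < s * (u / s) := (Nat.mul_lt_mul_left hs0).mpr he
        _ = u := Nat.mul_div_cancel' hs
    · exact Dvd.intro e rfl
  · intro d hd
    simp only [Finset.mem_filter] at hd
    exact Nat.mul_div_cancel' hd.2
  · intro e he
    exact Nat.mul_div_cancel_left _ hs0
  · intro d hd
    simp only [Finset.mem_filter] at hd
    rw [Nat.mul_div_cancel' hd.2]

theorem ec_cancel (s q : ℕ) (hs : s ≠ 0) (x : ℚ) :
    ec ((s * q : ℕ) : ℤ) ((s : ℚ) * x) = ec q x := by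
  unfold ec
  congr 1
  have hs' : (s : ℂ) ≠ 0 := by exact_mod_cast hs
  push_cast
  rw [show (2 * (Real.pi:ℂ) * Complex.I * ((s:ℂ) * (x:ℂ)))
    = (s:ℂ) * (2 * (Real.pi:ℂ) * Complex.I * (x:ℂ)) by ring]
  exact mul_div_mul_left _ _ hs'

open Finset ArithmeticFunction in
theorem ramanujan_sum (u : ℕ) (hu : 1 ≤ u) (a : ℤ) :
    ∑ d ∈ range u, (if Nat.gcd d u = 1 then ec u ((d : ℚ) * (a : ℚ)) else 0)
      = ∑ t ∈ u.divisors, ((moebius (u / t) : ℤ) : ℂ) * (if (t : ℤ) ∣ a then (t : ℂ) else 0) := by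
  have hu0 : u ≠ 0 := by omega
  calc ∑ d ∈ range u, (if Nat.gcd d u = 1 then ec u ((d : ℚ) * (a : ℚ)) else 0)
      = ∑ d ∈ range u, ∑ s ∈ u.divisors,
          (if s ∣ d then ((moebius s : ℤ) : ℂ) * ec u ((d : ℚ) * (a : ℚ)) else 0) := by
        refine Finset.sum_congr rfl fun d _ => ?_
        have h1 : (if Nat.gcd d u = 1 then ec u ((d : ℚ) * (a : ℚ)) else 0)
            = ((if Nat.gcd d u = 1 then (1:ℤ) else 0 : ℤ) : ℂ) * ec u ((d : ℚ) * (a : ℚ)) := by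
          split_ifs <;> simp
        rw [h1, moebius_indicator _, gcd_divisors_eq d u hu0, Finset.sum_filter]
        push_cast
        rw [Finset.sum_mul]
        refine Finset.sum_congr rfl fun s _ => ?_
        split_ifs <;> simp
    _ = ∑ s ∈ u.divisors, ∑ d ∈ range u,
          (if s ∣ d then ((moebius s : ℤ) : ℂ) * ec u ((d : ℚ) * (a : ℚ)) else 0) :=
        Finset.sum_comm
    _ = ∑ s ∈ u.divisors, ((moebius s : ℤ) : ℂ) *
          (if ((u / s : ℕ) : ℤ) ∣ a then ((u / s : ℕ) : ℂ) else 0) := by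
        refine Finset.sum_congr rfl fun s hs => ?_
        rw [Nat.mem_divisors] at hs
        obtain ⟨hsu, -⟩ := hs
        have hs0 : 0 < s := Nat.pos_of_ne_zero (by rintro rfl; exact hu0 (Nat.eq_zero_of_zero_dvd hsu))
        have hq : 1 ≤ u / s := Nat.one_le_div_iff hs0 |>.mpr (Nat.le_of_dvd (by omega) hsu)
        rw [sum_range_dvd u s hsu hs0]
        have key : ∀ e : ℕ, ec u (((s * e : ℕ) : ℚ) * (a : ℚ)) = ec ((u / s : ℕ) : ℤ) ((e : ℚ) * (a : ℚ)) := by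
          intro e
          rw [show (((s * e : ℕ) : ℚ) * (a : ℚ)) = (s : ℚ) * ((e : ℚ) * (a : ℚ)) by push_cast; ring]
          conv_lhs => rw [show u = s * (u / s) from (Nat.mul_div_cancel' hsu).symm]
          exact ec_cancel s (u / s) (by omega) _
        simp_rw [key]
        rw [← Finset.mul_sum, ec_geom (u / s) hq a]
    _ = ∑ s ∈ u.divisors, ((moebius (u / (u / s)) : ℤ) : ℂ) *
          (if ((u / s : ℕ) : ℤ) ∣ a then ((u / s : ℕ) : ℂ) else 0) :=
        Finset.sum_congr rfl fun s hs => by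
          rw [Nat.mem_divisors] at hs
          rw [Nat.div_div_self hs.1 hu0]
    _ = _ := Nat.sum_div_divisors u
        (fun t => ((moebius (u / t) : ℤ) : ℂ) * (if (t : ℤ) ∣ a then (t : ℂ) else 0))

def Bz {g : ℕ} (M : Matrix (Fin g) (Fin g) ℤ) (x y : Fin g → ℤ) : ℤ :=
  ∑ i, ∑ j, x i * M i j * y j

theorem bform_cast {g : ℕ} (M : Matrix (Fin g) (Fin g) ℤ) (x y : Fin g → ℤ) :
    bform M (fun i => (x i : ℚ)) (fun i => (y i : ℚ)) = (Bz M x y : ℚ) := by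
  simp only [bform, Bz, dotProduct, Matrix.mulVec, Matrix.map_apply]
  push_cast
  refine Finset.sum_congr rfl fun i _ => ?_
  rw [Finset.mul_sum]
  exact Finset.sum_congr rfl fun j _ => by ring

theorem bform_add_right {g : ℕ} (M : Matrix (Fin g) (Fin g) ℤ) (x y z : Fin g → ℚ) :
    bform M x (y + z) = bform M x y + bform M x z := by
  simp [bform, Matrix.mulVec_add, dotProduct_add]

theorem bform_smul_right {g : ℕ} (M : Matrix (Fin g) (Fin g) ℤ) (x : Fin g → ℚ) (c : ℚ)
    (y : Fin g → ℚ) : bform M x (c • y) = c * bform M x y := by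
  simp [bform, Matrix.mulVec_smul, dotProduct_smul, smul_eq_mul]

open Finset in
theorem Bz_symm {g : ℕ} (M : Matrix (Fin g) (Fin g) ℤ) (hsymm : M.IsSymm)
    (x y : Fin g → ℤ) : Bz M x y = Bz M y x := by
  simp only [Bz]
  rw [Finset.sum_comm]
  refine Finset.sum_congr rfl fun b _ => Finset.sum_congr rfl fun a _ => ?_
  rw [← hsymm.apply b a]
  ring

open Finset in
theorem Bz_expand {g : ℕ} (M : Matrix (Fin g) (Fin g) ℤ) (x y : Fin g → ℤ) (c : ℤ) :
    Bz M (fun i => x i + c * y i) (fun i => x i + c * y i)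
      = Bz M x x + c * Bz M x y + c * Bz M y x + c ^ 2 * Bz M y y := by
  simp only [Bz]
  calc ∑ i, ∑ j, (x i + c * y i) * M i j * (x j + c * y j)
      = ∑ i, ∑ j, (x i * M i j * x j + c * (x i * M i j * y j)
          + c * (y i * M i j * x j) + c ^ 2 * (y i * M i j * y j)) :=
        Finset.sum_congr rfl fun i _ => Finset.sum_congr rfl fun j _ => by ring
    _ = _ := by
        simp only [Finset.sum_add_distrib, Finset.mul_sum]

open Finset in
theorem even_Bz {g : ℕ} (M : Matrix (Fin g) (Fin g) ℤ) (hsymm : M.IsSymm)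
    (hdiag : ∀ i, Even (M i i)) (x : Fin g → ℤ) : Even (Bz M x x) := by
  have h1 : Bz M x x = ∑ p ∈ (Finset.univ ×ˢ Finset.univ), x p.1 * M p.1 p.2 * x p.2 := by
    rw [Finset.sum_product]
    rfl
  rw [h1, ← Finset.diag_union_offDiag (Finset.univ (α := Fin g)),
    Finset.sum_union (Finset.disjoint_diag_offDiag _), Finset.sum_diag]
  refine Even.add ?_ ?_
  · rw [even_iff_two_dvd]
    refine Finset.dvd_sum fun i _ => ?_
    obtain ⟨k, hk⟩ := hdiag i
    exact ⟨x i * k * x i, by rw [hk]; ring⟩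
  · rw [even_iff_two_dvd]
    have h2 : ((∑ p ∈ Finset.univ.offDiag, x p.1 * M p.1 p.2 * x p.2 : ℤ) : ZMod 2) = 0 := by
      push_cast
      refine Finset.sum_involution (fun p _ => Prod.swap p) ?_ ?_ ?_ ?_
      · intro p hp
        simp only [Prod.fst_swap, Prod.snd_swap]
        rw [hsymm.apply p.1 p.2]
        have h3 : ((x p.1 : ZMod 2) * (M p.1 p.2 : ZMod 2) * (x p.2 : ZMod 2))
            + ((x p.2 : ZMod 2) * (M p.1 p.2 : ZMod 2) * (x p.1 : ZMod 2))
            = 2 * ((x p.1 : ZMod 2) * (M p.1 p.2 : ZMod 2) * (x p.2 : ZMod 2)) := by ring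
        rw [h3]
        simp [show ((2 : ZMod 2)) = 0 from rfl]
      · intro p hp _
        rw [Finset.mem_offDiag] at hp
        intro hsw
        exact hp.2.2 (congrArg Prod.fst hsw).symm
      · intro p hp
        rw [Finset.mem_offDiag] at hp ⊢
        exact ⟨hp.2.1, hp.1, fun h => hp.2.2 h.symm⟩
      · intro p hp
        rfl
    rwa [ZMod.intCast_zmod_eq_zero_iff_dvd] at h2

def modEquiv (t s : ℕ) (ht : 0 < t) : Fin (t * s) ≃ Fin t × Fin s where
  toFun x := (⟨(x : ℕ) % t, Nat.mod_lt _ ht⟩,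
    ⟨(x : ℕ) / t, (Nat.div_lt_iff_lt_mul ht).mpr (Nat.lt_of_lt_of_eq x.2 (Nat.mul_comm t s))⟩)
  invFun p := ⟨(p.1 : ℕ) + t * (p.2 : ℕ), by
    calc (p.1 : ℕ) + t * (p.2 : ℕ) < t + t * (p.2 : ℕ) := by
          exact Nat.add_lt_add_right p.1.2 _
      _ = t * ((p.2 : ℕ) + 1) := by ring
      _ ≤ t * s := Nat.mul_le_mul_left t p.2.2⟩
  left_inv x := Fin.ext (Nat.mod_add_div _ _)
  right_inv p := by
    have h1 : ((p.1 : ℕ) + t * (p.2 : ℕ)) % t = (p.1 : ℕ) := by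
      rw [Nat.add_mul_mod_self_left, Nat.mod_eq_of_lt p.1.2]
    have h2 : ((p.1 : ℕ) + t * (p.2 : ℕ)) / t = (p.2 : ℕ) := by
      rw [Nat.add_mul_div_left _ _ ht, Nat.div_eq_of_lt p.1.2, Nat.zero_add]
    exact Prod.ext (Fin.ext h1) (Fin.ext h2)

theorem sum_fin_mod (u t s : ℕ) (hu : u = t * s) (ht : 0 < t) (h : Fin t → ℂ) :
    ∑ x : Fin u, h ⟨(x : ℕ) % t, Nat.mod_lt _ ht⟩ = (s : ℂ) * ∑ y : Fin t, h y := by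
  subst hu
  rw [Fintype.sum_equiv (modEquiv t s ht)
    (fun x => h ⟨(x : ℕ) % t, Nat.mod_lt _ ht⟩) (fun p => h p.1) (fun x => rfl)]
  rw [Fintype.sum_prod_type]
  simp [Finset.sum_const, Finset.card_univ, Finset.mul_sum]

theorem sum_fin_mod_pi (g u t s : ℕ) (hu : u = t * s) (ht : 0 < t)
    (k : (Fin g → Fin t) → ℂ) :
    ∑ r : Fin g → Fin u, k (fun i => ⟨((r i : ℕ)) % t, Nat.mod_lt _ ht⟩)
      = (s : ℂ) ^ g * ∑ r' : Fin g → Fin t, k r' := by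
  subst hu
  rw [Fintype.sum_equiv ((Equiv.piCongrRight (fun _ : Fin g => modEquiv t s ht)).trans
      (Equiv.arrowProdEquivProdArrow _ _ _))
    (fun r => k (fun i => ⟨((r i : ℕ)) % t, Nat.mod_lt _ ht⟩)) (fun p => k p.1)
    (fun r => rfl)]
  rw [Fintype.sum_prod_type]
  simp [Finset.sum_const, Finset.card_univ, Finset.mul_sum, Fintype.card_pi]


open ArithmeticFunction in
/-- the Ramanujan-sum evaluation
`Σ_{d(u)^×} e_u(ñd)𝒮(d,u) = u^{g+1} Σ_{t|u} μ(u/t) t^{−g} N(t)`. -/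
theorem d_sum_Ssum_eq_moebius_Ncount
    {g : ℕ} (hg : 0 < g) (M : Matrix (Fin g) (Fin g) ℤ)
    (hsymm : M.IsSymm) (hdiag : ∀ i, Even (M i i)) (hdet : M.det ≠ 0)
    (α β : Fin g → ℚ) (hα : IsDual M α) (hβ : IsDual M β)
    (ℓ m n : ℤ)
    (hm : ∃ z : ℤ, (m : ℚ) / (2 * M.det) - qf M α = (z : ℚ))
    (hℓ : ∃ z : ℤ, (ℓ : ℚ) / (M.det : ℚ) - bform M α β = (z : ℚ))
    (hn : ∃ z : ℤ, (n : ℚ) / (2 * M.det) - qf M β = (z : ℚ))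
    (u : ℕ) (hu : 1 ≤ u) :
    ∑ d ∈ Finset.range u,
        (if Nat.gcd d u = 1 then
          ec u (((n : ℚ) / (2 * M.det) - qf M β) * (d : ℚ)) * Ssum M α β ℓ m (d : ℤ) u
        else 0)
      = (u : ℂ) ^ (g + 1) *
          ∑ t ∈ u.divisors,
            ((moebius (u / t) : ℤ) : ℂ) * (t : ℂ) ^ (-(g : ℤ)) *
              (Ncount M α β ℓ m n t : ℂ) := by
  classical
  obtain ⟨mz, hmz⟩ := hm
  obtain ⟨lz, hlz⟩ := hℓ
  obtain ⟨nz, hnz⟩ := hn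
  choose aα haα using hα
  choose aβ haβ using hβ
  have hu0 : u ≠ 0 := by omega
  have hQex : ∀ r : Fin g → ℤ, ∃ z : ℤ, Bz M r r = 2 * z := by
    intro r
    obtain ⟨k, hk⟩ := even_Bz M hsymm hdiag r
    exact ⟨k, by omega⟩
  choose Q hQ using hQex
  have hqf : ∀ r : Fin g → ℤ, qf M (fun i => (r i : ℚ)) = (Q r : ℚ) := by
    intro r
    rw [qf, bform_cast, hQ r]
    push_cast
    ring
  set Fz : ℤ → (Fin g → ℤ) → ℤ :=
    fun v r => mz * v ^ 2 - aα r * v - Q r + aβ r - lz * v + nz with hFzdef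
  have hFz : ∀ (v : ℤ) (r : Fin g → ℤ),
      fval M α β ℓ m v r + ((n : ℚ) / (2 * M.det) - qf M β) = ((Fz v r : ℤ) : ℚ) := by
    intro v r
    simp only [hFzdef, fval]
    rw [hmz, hlz, hnz, haα r, haβ r, hqf r]
    push_cast
    ring
  have lin : ∀ (γ : Fin g → ℚ) (aγ : (Fin g → ℤ) → ℤ),
      (∀ y, bform M γ (fun i => (y i : ℚ)) = (aγ y : ℚ)) →
      ∀ (x y : Fin g → ℤ) (c : ℤ), aγ (fun i => x i + c * y i) = aγ x + c * aγ y := by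
    intro γ aγ ha x y c
    have h1 := ha (fun i => x i + c * y i)
    have hcast : (fun i => ((x i + c * y i : ℤ) : ℚ))
        = (fun i => (x i : ℚ)) + (c : ℚ) • (fun i => (y i : ℚ)) := by
      funext i
      simp only [Pi.add_apply, Pi.smul_apply, smul_eq_mul]
      push_cast
      ring
    rw [hcast, bform_add_right, bform_smul_right, ha, ha] at h1
    have key : ((aγ (fun i => x i + c * y i) : ℤ) : ℚ) = ((aγ x + c * aγ y : ℤ) : ℚ) := by
      rw [← h1]
      push_cast
      ring
    exact_mod_cast key
  have hQ_exp : ∀ (x y : Fin g → ℤ) (c : ℤ),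
      Q (fun i => x i + c * y i) = Q x + c * Bz M x y + c ^ 2 * Q y := by
    intro x y c
    have h2 : 2 * Q (fun i => x i + c * y i) = 2 * (Q x + c * Bz M x y + c ^ 2 * Q y) := by
      rw [← hQ, Bz_expand, hQ x, hQ y, Bz_symm M hsymm y x]
      ring
    exact mul_left_cancel₀ two_ne_zero h2
  have hper : ∀ (t : ℕ) (v' w : ℤ) (r' s : Fin g → ℤ),
      (t : ℤ) ∣ (Fz (v' + t * w) (fun i => r' i + t * s i) - Fz v' r') := by
    intro t v' w r' s
    simp only [hFzdef]
    rw [lin α aα haα r' s t, lin β aβ haβ r' s t, hQ_exp r' s t]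
    exact ⟨mz * (2 * v' * w) + mz * t * w ^ 2 - aα r' * w - aα s * v' - t * (aα s * w)
      - Bz M r' s - t * Q s + aβ s - lz * w, by ring⟩
  have hper' : ∀ (t : ℕ), 0 < t → ∀ (v : ℤ) (r : Fin g → ℤ),
      ((t : ℤ) ∣ Fz v r ↔ (t : ℤ) ∣ Fz (v % t) (fun i => r i % t)) := by
    intro t ht v r
    have h1 := hper t (v % t) (v / t) (fun i => r i % t) (fun i => r i / t)
    have hv : v % (t : ℤ) + (t : ℤ) * (v / t) = v := Int.emod_add_mul_ediv v t
    have hfun : (fun i => r i % (t : ℤ) + (t : ℤ) * (r i / t)) = r :=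
      funext fun i => Int.emod_add_mul_ediv (r i) t
    rw [hv, hfun] at h1
    constructor
    · intro h
      have h2 := dvd_sub h h1
      simpa using h2
    · intro h
      have h2 := dvd_add h1 h
      simpa using h2
  have hcount : ∀ t ∈ u.divisors,
      (∑ v : Fin u, ∑ r : Fin g → Fin u,
        if (t : ℤ) ∣ Fz ((v : ℕ) : ℤ) (fun i => ((r i : ℕ) : ℤ)) then (t : ℂ) else 0)
      = (t : ℂ) * (((u / t : ℕ) : ℂ)) ^ (g + 1) * (Ncount M α β ℓ m n t : ℂ) := by
    intro t ht
    rw [Nat.mem_divisors] at ht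
    have ht0 : 0 < t := Nat.pos_of_ne_zero (by rintro rfl; exact hu0 (Nat.eq_zero_of_zero_dvd ht.1))
    have hu_eq : u = t * (u / t) := (Nat.mul_div_cancel' ht.1).symm
    set H : Fin t → (Fin g → Fin t) → ℂ := fun v' r' =>
      if (t : ℤ) ∣ Fz ((v' : ℕ) : ℤ) (fun i => ((r' i : ℕ) : ℤ)) then (t : ℂ) else 0 with hH
    have hred : ∀ (v : Fin u) (r : Fin g → Fin u),
        (if (t : ℤ) ∣ Fz ((v : ℕ) : ℤ) (fun i => ((r i : ℕ) : ℤ)) then (t : ℂ) else 0)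
        = H ⟨(v : ℕ) % t, Nat.mod_lt _ ht0⟩ (fun i => ⟨((r i : ℕ)) % t, Nat.mod_lt _ ht0⟩) := by
      intro v r
      simp only [hH]
      refine if_congr ?_ rfl rfl
      have e1 : ((((v : ℕ) % t : ℕ)) : ℤ) = ((v : ℕ) : ℤ) % (t : ℤ) := Int.natCast_mod _ _
      have e2 : (fun i => ((((r i : ℕ) % t : ℕ)) : ℤ)) = fun i => ((r i : ℕ) : ℤ) % (t : ℤ) :=
        funext fun i => Int.natCast_mod _ _
      rw [e1, e2]
      exact hper' t ht0 _ _
    have hcnt : (∑ v' : Fin t, ∑ r' : Fin g → Fin t, H v' r')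
        = (t : ℂ) * (Ncount M α β ℓ m n t : ℂ) := by
      have hN : Ncount M α β ℓ m n t = (Finset.univ.filter
          (fun p : Fin t × (Fin g → Fin t) =>
            (t : ℤ) ∣ Fz ((p.1 : ℕ) : ℤ) (fun i => ((p.2 i : ℕ) : ℤ)))).card := by
        unfold Ncount
        rw [Nat.card_eq_fintype_card, Fintype.card_subtype]
        congr 1
        ext p
        simp only [Finset.mem_filter, Finset.mem_univ, true_and]
        constructor
        · rintro ⟨z, hz⟩
          rw [hFz] at hz
          have hz' : Fz ((p.1 : ℕ) : ℤ) (fun i => ((p.2 i : ℕ) : ℤ)) = z * t := by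
            exact_mod_cast hz
          exact ⟨z, by rw [hz']; ring⟩
        · rintro ⟨z, hz⟩
          refine ⟨z, ?_⟩
          rw [hFz, hz]
          push_cast
          ring
      rw [hN]
      have hsplit : ∀ (v' : Fin t) (r' : Fin g → Fin t), H v' r'
          = (t : ℂ) * (if (t : ℤ) ∣ Fz ((v' : ℕ) : ℤ) (fun i => ((r' i : ℕ) : ℤ))
              then (1 : ℂ) else 0) := by
        intro v' r'
        simp only [hH]
        split_ifs <;> simp
      calc (∑ v' : Fin t, ∑ r' : Fin g → Fin t, H v' r')
          = ∑ v' : Fin t, ∑ r' : Fin g → Fin t, (t : ℂ) *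
              (if (t : ℤ) ∣ Fz ((v' : ℕ) : ℤ) (fun i => ((r' i : ℕ) : ℤ)) then (1:ℂ) else 0) :=
            Finset.sum_congr rfl fun v' _ => Finset.sum_congr rfl fun r' _ => hsplit v' r'
        _ = (t : ℂ) * ∑ v' : Fin t, ∑ r' : Fin g → Fin t,
              (if (t : ℤ) ∣ Fz ((v' : ℕ) : ℤ) (fun i => ((r' i : ℕ) : ℤ)) then (1:ℂ) else 0) := by
            rw [Finset.mul_sum]
            exact Finset.sum_congr rfl fun v' _ => (Finset.mul_sum _ _ _).symm
        _ = (t : ℂ) * ∑ p : Fin t × (Fin g → Fin t),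
              (if (t : ℤ) ∣ Fz ((p.1 : ℕ) : ℤ) (fun i => ((p.2 i : ℕ) : ℤ)) then (1:ℂ) else 0) := by
            congr 1
            exact (Fintype.sum_prod_type (f := fun p : Fin t × (Fin g → Fin t) =>
              if (t : ℤ) ∣ Fz ((p.1 : ℕ) : ℤ) (fun i => ((p.2 i : ℕ) : ℤ))
              then (1:ℂ) else 0)).symm
        _ = (t : ℂ) * ((Finset.univ.filter
            (fun p : Fin t × (Fin g → Fin t) =>
              (t : ℤ) ∣ Fz ((p.1 : ℕ) : ℤ) (fun i => ((p.2 i : ℕ) : ℤ)))).card : ℂ) := by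
            rw [Finset.sum_boole]
    calc (∑ v : Fin u, ∑ r : Fin g → Fin u,
        if (t : ℤ) ∣ Fz ((v : ℕ) : ℤ) (fun i => ((r i : ℕ) : ℤ)) then (t : ℂ) else 0)
        = ∑ v : Fin u, ∑ r : Fin g → Fin u,
            H ⟨(v : ℕ) % t, Nat.mod_lt _ ht0⟩ (fun i => ⟨((r i : ℕ)) % t, Nat.mod_lt _ ht0⟩) :=
          Finset.sum_congr rfl fun v _ => Finset.sum_congr rfl fun r _ => hred v r
      _ = ∑ v : Fin u, ((u / t : ℕ) : ℂ) ^ g *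
            ∑ r' : Fin g → Fin t, H ⟨(v : ℕ) % t, Nat.mod_lt _ ht0⟩ r' :=
          Finset.sum_congr rfl fun v _ =>
            sum_fin_mod_pi g u t (u / t) hu_eq ht0 (H ⟨(v : ℕ) % t, Nat.mod_lt _ ht0⟩)
      _ = ((u / t : ℕ) : ℂ) ^ g * ∑ v : Fin u,
            (fun v' => ∑ r' : Fin g → Fin t, H v' r') ⟨(v : ℕ) % t, Nat.mod_lt _ ht0⟩ := by
          rw [← Finset.mul_sum]
      _ = ((u / t : ℕ) : ℂ) ^ g * (((u / t : ℕ) : ℂ) *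
            ∑ v' : Fin t, ∑ r' : Fin g → Fin t, H v' r') := by
          rw [sum_fin_mod u t (u / t) hu_eq ht0 (fun v' => ∑ r' : Fin g → Fin t, H v' r')]
      _ = (t : ℂ) * (((u / t : ℕ) : ℂ)) ^ (g + 1) * (Ncount M α β ℓ m n t : ℂ) := by
          rw [hcnt]
          ring
  have hd1 : ∀ d : ℕ,
      (if Nat.gcd d u = 1 then
        ec u (((n : ℚ) / (2 * M.det) - qf M β) * (d : ℚ)) * Ssum M α β ℓ m (d : ℤ) u
      else 0)
      = ∑ v : Fin u, ∑ r : Fin g → Fin u,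
          (if Nat.gcd d u = 1 then
            ec u ((d : ℚ) * ((Fz ((v : ℕ) : ℤ) (fun i => ((r i : ℕ) : ℤ)) : ℤ) : ℚ))
          else 0) := by
    intro d
    by_cases hgcd : Nat.gcd d u = 1
    · simp only [hgcd, if_pos]
      simp only [Ssum]
      rw [Finset.mul_sum]
      refine Finset.sum_congr rfl fun v _ => ?_
      rw [Finset.mul_sum]
      refine Finset.sum_congr rfl fun r _ => ?_
      rw [← ec_add']
      congr 1
      rw [← hFz]
      push_cast
      ring
    · simp only [hgcd, if_neg]
      simp
  calc (∑ d ∈ Finset.range u,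
      if Nat.gcd d u = 1 then
        ec u (((n : ℚ) / (2 * M.det) - qf M β) * (d : ℚ)) * Ssum M α β ℓ m (d : ℤ) u
      else 0)
      = ∑ d ∈ Finset.range u, ∑ v : Fin u, ∑ r : Fin g → Fin u,
          (if Nat.gcd d u = 1 then
            ec u ((d : ℚ) * ((Fz ((v : ℕ) : ℤ) (fun i => ((r i : ℕ) : ℤ)) : ℤ) : ℚ))
          else 0) := Finset.sum_congr rfl fun d _ => hd1 d
    _ = ∑ v : Fin u, ∑ d ∈ Finset.range u, ∑ r : Fin g → Fin u,
          (if Nat.gcd d u = 1 then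
            ec u ((d : ℚ) * ((Fz ((v : ℕ) : ℤ) (fun i => ((r i : ℕ) : ℤ)) : ℤ) : ℚ))
          else 0) := Finset.sum_comm
    _ = ∑ v : Fin u, ∑ r : Fin g → Fin u, ∑ d ∈ Finset.range u,
          (if Nat.gcd d u = 1 then
            ec u ((d : ℚ) * ((Fz ((v : ℕ) : ℤ) (fun i => ((r i : ℕ) : ℤ)) : ℤ) : ℚ))
          else 0) := Finset.sum_congr rfl fun v _ => Finset.sum_comm
    _ = ∑ v : Fin u, ∑ r : Fin g → Fin u, ∑ t ∈ u.divisors,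
          ((ArithmeticFunction.moebius (u / t) : ℤ) : ℂ) *
            (if (t : ℤ) ∣ Fz ((v : ℕ) : ℤ) (fun i => ((r i : ℕ) : ℤ)) then (t : ℂ) else 0) :=
        Finset.sum_congr rfl fun v _ => Finset.sum_congr rfl fun r _ =>
          ramanujan_sum u hu (Fz ((v : ℕ) : ℤ) (fun i => ((r i : ℕ) : ℤ)))
    _ = ∑ v : Fin u, ∑ t ∈ u.divisors, ∑ r : Fin g → Fin u,
          ((ArithmeticFunction.moebius (u / t) : ℤ) : ℂ) *
            (if (t : ℤ) ∣ Fz ((v : ℕ) : ℤ) (fun i => ((r i : ℕ) : ℤ)) then (t : ℂ) else 0) :=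
        Finset.sum_congr rfl fun v _ => Finset.sum_comm
    _ = ∑ t ∈ u.divisors, ∑ v : Fin u, ∑ r : Fin g → Fin u,
          ((ArithmeticFunction.moebius (u / t) : ℤ) : ℂ) *
            (if (t : ℤ) ∣ Fz ((v : ℕ) : ℤ) (fun i => ((r i : ℕ) : ℤ)) then (t : ℂ) else 0) :=
        Finset.sum_comm
    _ = ∑ t ∈ u.divisors, ((ArithmeticFunction.moebius (u / t) : ℤ) : ℂ) *
          ∑ v : Fin u, ∑ r : Fin g → Fin u,
            (if (t : ℤ) ∣ Fz ((v : ℕ) : ℤ) (fun i => ((r i : ℕ) : ℤ)) then (t : ℂ) else 0) := by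
        refine Finset.sum_congr rfl fun t _ => ?_
        rw [Finset.mul_sum]
        exact Finset.sum_congr rfl fun v _ => (Finset.mul_sum _ _ _).symm
    _ = ∑ t ∈ u.divisors, ((ArithmeticFunction.moebius (u / t) : ℤ) : ℂ) *
          ((t : ℂ) * (((u / t : ℕ) : ℂ)) ^ (g + 1) * (Ncount M α β ℓ m n t : ℂ)) :=
        Finset.sum_congr rfl fun t ht => by rw [hcount t ht]
    _ = (u : ℂ) ^ (g + 1) * ∑ t ∈ u.divisors,
          ((ArithmeticFunction.moebius (u / t) : ℤ) : ℂ) * (t : ℂ) ^ (-(g : ℤ)) *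
            (Ncount M α β ℓ m n t : ℂ) := by
        rw [Finset.mul_sum]
        refine Finset.sum_congr rfl fun t ht => ?_
        rw [Nat.mem_divisors] at ht
        have ht0 : t ≠ 0 := by rintro rfl; exact hu0 (Nat.eq_zero_of_zero_dvd ht.1)
        have htC : (t : ℂ) ≠ 0 := by exact_mod_cast ht0
        have hcast : ((u / t : ℕ) : ℂ) = (u : ℂ) / (t : ℂ) := Nat.cast_div ht.1 htC
        rw [hcast, zpow_neg, zpow_natCast, div_pow]
        field_simp
        ring
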